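/- For any Galton-Watson process with offspring distribution having mean m > 1 and finite variance σ², the survival probability is at least m(m-1)/(σ² + m(m-1)). -/

import Mathlib

open MeasureTheory ProbabilityTheory ENNReal

set_option maxHeartbeats 2000000 in
/-- For any Galton-Watson process with offspring distribution having mean `m > 1` and
finite variance `σ²`, the survival probability is at least `m(m-1)/(σ² + m(m-1))`. -/
theorem stmt_0 {Ω : Type*} [MeasurableSpace Ω] (P : Measure Ω) [IsProbabilityMeasure P]
    (X : ℕ → ℕ → Ω → ℕ) (Z : ℕ → Ω → ℕ) (m σ2 : ℝ)
    (hmeas : ∀ n i, Measurable (X n i))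
    (hindep : iIndepFun (fun p : ℕ × ℕ => X p.1 p.2) P)
    (hident : ∀ n i n' i', Measure.map (X n i) P = Measure.map (X n' i') P)
    (hmean : ∀ n i, ∫ ω, (X n i ω : ℝ) ∂P = m)
    (hvar : ∀ n i, variance (fun ω => (X n i ω : ℝ)) P = σ2)
    (hL2 : ∀ n i, MemLp (fun ω => (X n i ω : ℝ)) 2 P)
    (hm : 1 < m)
    (hZ0 : ∀ ω, Z 0 ω = 1)
    (hZrec : ∀ n ω, Z (n + 1) ω = ∑ i ∈ Finset.range (Z n ω), X n i ω) :
    ENNReal.ofReal (m * (m - 1) / (σ2 + m * (m - 1))) ≤ P {ω | ∀ n, 1 ≤ Z n ω} := by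
  -- basic real facts
  have hm0 : (0:ℝ) < m := by linarith
  have hσ0 : 0 ≤ σ2 := (hvar 0 0) ▸ variance_nonneg _ _
  -- σ-algebras
  set F : ℕ → MeasurableSpace Ω :=
    fun n => ⨆ p ∈ {p : ℕ × ℕ | p.1 < n}, MeasurableSpace.comap (X p.1 p.2) inferInstance with hF
  set G : ℕ → MeasurableSpace Ω :=
    fun n => ⨆ p ∈ {p : ℕ × ℕ | p.1 = n}, MeasurableSpace.comap (X p.1 p.2) inferInstance with hG
  have hcomap_le : ∀ p : ℕ × ℕ, MeasurableSpace.comap (X p.1 p.2) inferInstance ≤ ‹MeasurableSpace Ω› :=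
    fun p => (hmeas p.1 p.2).comap_le
  have hFle : ∀ n, F n ≤ ‹MeasurableSpace Ω› := fun n => iSup₂_le fun p _ => hcomap_le p
  have hGle : ∀ n, G n ≤ ‹MeasurableSpace Ω› := fun n => iSup₂_le fun p _ => hcomap_le p
  have hXG : ∀ n i, Measurable[G n] (X n i) := by
    intro n i
    have h1 : MeasurableSpace.comap (X n i) inferInstance ≤ G n := by
      have := le_iSup₂ (f := fun (p : ℕ × ℕ) (_ : p ∈ {p : ℕ × ℕ | p.1 = n}) =>
        MeasurableSpace.comap (X p.1 p.2) inferInstance) (n, i) rfl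
      exact this
    exact (Measurable.of_comap_le le_rfl).mono h1 le_rfl
  have hXF : ∀ n i N, n < N → Measurable[F N] (X n i) := by
    intro n i N hn
    have h1 : MeasurableSpace.comap (X n i) inferInstance ≤ F N := by
      have := le_iSup₂ (f := fun (p : ℕ × ℕ) (_ : p ∈ {p : ℕ × ℕ | p.1 < N}) =>
        MeasurableSpace.comap (X p.1 p.2) inferInstance) (n, i) hn
      exact this
    exact (Measurable.of_comap_le le_rfl).mono h1 le_rfl
  -- Z n is F n measurable
  have hZF : ∀ n, Measurable[F n] (Z n) := by
    intro n
    induction n with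
    | zero =>
      have : Z 0 = fun _ => 1 := funext hZ0
      rw [this]; exact @measurable_const _ _ _ (F 0) _
    | succ n ih =>
      have hFmono : F n ≤ F (n+1) := by
        refine iSup₂_le fun p hp => ?_
        exact le_iSup₂ (f := fun (p : ℕ × ℕ) (_ : p ∈ {p : ℕ × ℕ | p.1 < n+1}) =>
          MeasurableSpace.comap (X p.1 p.2) inferInstance) p (Nat.lt_succ_of_lt hp)
      apply @measurable_to_countable' ℕ Ω _ _ (F (n+1)) (Z (n+1))
      intro s
      have : (Z (n+1)) ⁻¹' {s} = ⋃ k, {ω | Z n ω = k} ∩ {ω | ∑ i ∈ Finset.range k, X n i ω = s} := by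
        ext ω
        simp only [Set.mem_preimage, Set.mem_singleton_iff, Set.mem_iUnion, Set.mem_inter_iff,
          Set.mem_setOf_eq, hZrec n ω]
        constructor
        · intro h; exact ⟨Z n ω, rfl, h⟩
        · rintro ⟨k, hk, h⟩; rw [hk]; exact h
      rw [this]
      apply MeasurableSet.iUnion
      intro k
      apply MeasurableSet.inter
      · exact hFmono _ (ih (MeasurableSet.singleton k) : MeasurableSet[F n] _)
      · have hsum : Measurable[F (n+1)] (fun ω => ∑ i ∈ Finset.range k, X n i ω) :=
          Finset.measurable_sum _ (fun i _ => hXF n i (n+1) (Nat.lt_succ_self n))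
        exact hsum (MeasurableSet.singleton s)
  have hZmeas : ∀ n, Measurable (Z n) := fun n => (hZF n).mono (hFle n) le_rfl
  -- independence of F n and G n
  have hFG : ∀ n, Indep (F n) (G n) P := by
    intro n
    apply indep_iSup_of_disjoint hcomap_le hindep.iIndep
    rw [Set.disjoint_left]
    intro p hp hp'
    exact absurd ((hp' : p.1 = n) ▸ (hp : p.1 < n)) (lt_irrefl n)
  -- notation
  set M : ℝ≥0∞ := ENNReal.ofReal m with hM
  set E2 : ℝ≥0∞ := ENNReal.ofReal (σ2 + m^2) with hE2
  have mcoe : Measurable (fun k : ℕ => (k : ℝ≥0∞)) := measurable_from_top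
  have hXlint : ∀ n i, ∫⁻ ω, (X n i ω : ℝ≥0∞) ∂P = M := by
    intro n i
    have h1 := ofReal_integral_eq_lintegral_ofReal ((hL2 n i).integrable one_le_two)
      (Filter.Eventually.of_forall fun ω => Nat.cast_nonneg _)
    rw [hmean n i] at h1
    rw [hM, h1]
    congr 1; ext ω; exact (ENNReal.ofReal_natCast _).symm
  have hX2lint : ∀ n i, ∫⁻ ω, ((X n i ω : ℝ≥0∞))^2 ∂P = E2 := by
    intro n i
    have hint : Integrable (fun ω => ((X n i ω : ℝ))^2) P := by
      have := (hL2 n i).integrable_sq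
      simpa [pow_two] using this
    have h1 := ofReal_integral_eq_lintegral_ofReal hint
      (Filter.Eventually.of_forall fun ω => sq_nonneg _)
    have h2 : ∫ ω, ((X n i ω : ℝ))^2 ∂P = σ2 + m^2 := by
      have hv := variance_eq_sub (hL2 n i)
      rw [hvar n i, hmean n i] at hv
      have : ∫ ω, ((X n i ω : ℝ))^2 ∂P = P[(fun ω => (X n i ω : ℝ)) ^ 2] := by
        congr 1
      rw [this]; linarith
    rw [h2] at h1
    rw [hE2, h1]
    congr 1; ext ω
    rw [ENNReal.ofReal_pow (Nat.cast_nonneg _)]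
    congr 1; exact (ENNReal.ofReal_natCast _).symm
  -- measurable sets {i < Z n}
  have hAset : ∀ n i, MeasurableSet[F n] {ω | i < Z n ω} := fun n i =>
    hZF n (measurableSet_Ioi : MeasurableSet (Set.Ioi i))
  have hAsetP : ∀ n i, MeasurableSet {ω | i < Z n ω} := fun n i => hFle n _ (hAset n i)
  -- factorization
  have hfact : ∀ n (g : Ω → ℝ≥0∞), Measurable[G n] g → ∀ (s : Set Ω), MeasurableSet[F n] s →
      ∫⁻ ω, s.indicator 1 ω * g ω ∂P = P s * ∫⁻ ω, g ω ∂P := by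
    intro n g hg s hs
    have hf : Measurable[F n] (s.indicator (1 : Ω → ℝ≥0∞)) :=
      measurable_const.indicator hs
    rw [lintegral_mul_eq_lintegral_mul_lintegral_of_independent_measurableSpace (hFle n) (hGle n)
      (hFG n) hf hg, lintegral_indicator_one (hFle n _ hs)]
  have hXGc : ∀ n i, Measurable[G n] fun ω => (X n i ω : ℝ≥0∞) :=
    fun n i => mcoe.comp (hXG n i)
  have hXc : ∀ n i, Measurable fun ω => (X n i ω : ℝ≥0∞) :=
    fun n i => mcoe.comp (hmeas n i)
  have hXXlint : ∀ n i j, i ≠ j →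
      ∫⁻ ω, (X n i ω : ℝ≥0∞) * (X n j ω : ℝ≥0∞) ∂P = M * M := by
    intro n i j hij
    have hne : ((n,i) : ℕ × ℕ) ≠ (n,j) := by simp [hij]
    have hind : IndepFun (fun ω => (X n i ω : ℝ≥0∞)) (fun ω => (X n j ω : ℝ≥0∞)) P :=
      (hindep.indepFun hne).comp mcoe mcoe
    rw [lintegral_mul_eq_lintegral_mul_lintegral_of_indepFun''
      (hXc n i).aemeasurable (hXc n j).aemeasurable hind,
      hXlint, hXlint]
  -- layer cake for naturals
  have hcast : ∀ k : ℕ, (k : ℝ≥0∞) = ∑' i : ℕ, if i < k then 1 else 0 := by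
    intro k
    rw [tsum_eq_sum (s := Finset.range k) (fun i hi => if_neg (by simpa using hi)),
      Finset.sum_congr rfl (fun i hi => if_pos (Finset.mem_range.mp hi))]
    simp
  set A : ℕ → ℝ≥0∞ := fun n => ∫⁻ ω, (Z n ω : ℝ≥0∞) ∂P with hA
  set B : ℕ → ℝ≥0∞ := fun n => ∫⁻ ω, ((Z n ω : ℝ≥0∞))^2 ∂P with hB
  have hitemeas : ∀ n i, Measurable fun ω => (if i < Z n ω then (1:ℝ≥0∞) else 0) :=
    fun n i => Measurable.ite (hAsetP n i) measurable_const measurable_const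
  have hiteint : ∀ n i, ∫⁻ ω, (if i < Z n ω then (1:ℝ≥0∞) else 0) ∂P = P {ω | i < Z n ω} := by
    intro n i
    rw [show (fun ω => (if i < Z n ω then (1:ℝ≥0∞) else 0))
        = {ω | i < Z n ω}.indicator (fun _ => 1) from
      funext fun ω => by by_cases h : i < Z n ω <;> simp [h]]
    exact lintegral_indicator_one (hAsetP n i)
  have hAq : ∀ n, A n = ∑' i : ℕ, P {ω | i < Z n ω} := by
    intro n
    calc A n = ∫⁻ ω, ∑' i : ℕ, (if i < Z n ω then (1:ℝ≥0∞) else 0) ∂P :=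
          lintegral_congr fun ω => hcast (Z n ω)
      _ = ∑' i : ℕ, ∫⁻ ω, (if i < Z n ω then (1:ℝ≥0∞) else 0) ∂P :=
          lintegral_tsum fun i => (hitemeas n i).aemeasurable
      _ = ∑' i : ℕ, P {ω | i < Z n ω} := tsum_congr fun i => hiteint n i
  have hBq : ∀ n, B n = ∑' i : ℕ, ∑' j : ℕ, P ({ω | i < Z n ω} ∩ {ω | j < Z n ω}) := by
    intro n
    have hpt : ∀ ω, ((Z n ω : ℝ≥0∞))^2 = ∑' i : ℕ, ∑' j : ℕ,
        ((if i < Z n ω then (1:ℝ≥0∞) else 0) * (if j < Z n ω then (1:ℝ≥0∞) else 0)) := by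
      intro ω
      rw [pow_two, hcast (Z n ω), ← ENNReal.tsum_mul_right]
      exact tsum_congr fun i => by rw [← ENNReal.tsum_mul_left]
    have hprodint : ∀ i j, ∫⁻ ω,
        ((if i < Z n ω then (1:ℝ≥0∞) else 0) * (if j < Z n ω then (1:ℝ≥0∞) else 0)) ∂P
        = P ({ω | i < Z n ω} ∩ {ω | j < Z n ω}) := by
      intro i j
      rw [show (fun ω => (if i < Z n ω then (1:ℝ≥0∞) else 0) * (if j < Z n ω then (1:ℝ≥0∞) else 0))
          = ({ω | i < Z n ω} ∩ {ω | j < Z n ω}).indicator (fun _ => 1) from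
        funext fun ω => by by_cases h1 : i < Z n ω <;> by_cases h2 : j < Z n ω <;>
          simp [h1, h2, Set.indicator_apply]]
      exact lintegral_indicator_one ((hAsetP n i).inter (hAsetP n j))
    calc B n = ∫⁻ ω, ∑' i : ℕ, ∑' j : ℕ,
          ((if i < Z n ω then (1:ℝ≥0∞) else 0) * (if j < Z n ω then (1:ℝ≥0∞) else 0)) ∂P :=
          lintegral_congr hpt
      _ = ∑' i : ℕ, ∫⁻ ω, ∑' j : ℕ,
          ((if i < Z n ω then (1:ℝ≥0∞) else 0) * (if j < Z n ω then (1:ℝ≥0∞) else 0)) ∂P :=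
          lintegral_tsum fun i => (Measurable.ennreal_tsum fun j =>
            (hitemeas n i).mul (hitemeas n j)).aemeasurable
      _ = ∑' i : ℕ, ∑' j : ℕ, ∫⁻ ω,
          ((if i < Z n ω then (1:ℝ≥0∞) else 0) * (if j < Z n ω then (1:ℝ≥0∞) else 0)) ∂P :=
          tsum_congr fun i => lintegral_tsum fun j => ((hitemeas n i).mul (hitemeas n j)).aemeasurable
      _ = ∑' i : ℕ, ∑' j : ℕ, P ({ω | i < Z n ω} ∩ {ω | j < Z n ω}) :=
          tsum_congr fun i => tsum_congr fun j => hprodint i j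
  -- recursion pointwise
  have hZpt : ∀ n ω, ((Z (n+1) ω : ℝ≥0∞))
      = ∑' i : ℕ, (if i < Z n ω then (1:ℝ≥0∞) else 0) * (X n i ω : ℝ≥0∞) := by
    intro n ω
    rw [hZrec n ω, Nat.cast_sum,
      tsum_eq_sum (s := Finset.range (Z n ω)) (fun i hi => by
        rw [if_neg (by simpa using hi), zero_mul])]
    exact (Finset.sum_congr rfl fun i hi => by
      rw [if_pos (Finset.mem_range.mp hi), one_mul]).symm
  -- A recursion
  have hArec : ∀ n, A (n+1) = M * A n := by
    intro n
    have hterm : ∀ i : ℕ, ∫⁻ ω, (if i < Z n ω then (1:ℝ≥0∞) else 0) * (X n i ω : ℝ≥0∞) ∂P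
        = P {ω | i < Z n ω} * M := by
      intro i
      rw [show (fun ω => (if i < Z n ω then (1:ℝ≥0∞) else 0) * (X n i ω : ℝ≥0∞))
          = (fun ω => ({ω | i < Z n ω}).indicator 1 ω * (X n i ω : ℝ≥0∞)) from
        funext fun ω => by by_cases h : i < Z n ω <;> simp [h]]
      rw [hfact n _ (hXGc n i) _ (hAset n i), hXlint n i]
    calc A (n+1) = ∫⁻ ω, ∑' i : ℕ, (if i < Z n ω then (1:ℝ≥0∞) else 0) * (X n i ω : ℝ≥0∞) ∂P :=
          lintegral_congr fun ω => hZpt n ω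
      _ = ∑' i : ℕ, ∫⁻ ω, (if i < Z n ω then (1:ℝ≥0∞) else 0) * (X n i ω : ℝ≥0∞) ∂P :=
          lintegral_tsum fun i => ((hitemeas n i).mul (hXc n i)).aemeasurable
      _ = ∑' i : ℕ, P {ω | i < Z n ω} * M := tsum_congr hterm
      _ = (∑' i : ℕ, P {ω | i < Z n ω}) * M := ENNReal.tsum_mul_right
      _ = M * A n := by rw [← hAq n, mul_comm]
  -- B recursion
  have hkey : ∀ n, B (n+1) + (M*M) * A n = (M*M) * B n + E2 * A n := by
    intro n
    set f : ℕ → Ω → ℝ≥0∞ :=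
      fun i ω => (if i < Z n ω then (1:ℝ≥0∞) else 0) * (X n i ω : ℝ≥0∞) with hf
    have hfmeas : ∀ i, Measurable (f i) := fun i => (hitemeas n i).mul (hXc n i)
    set c : ℕ → ℕ → ℝ≥0∞ := fun i j => P ({ω | i < Z n ω} ∩ {ω | j < Z n ω}) with hc
    set D : ℝ≥0∞ := ∑' i : ℕ, ∑' j : ℕ, (if j = i then 0 else c i j) with hD
    have hsplit : ∀ (g : ℕ → ℝ≥0∞) (i : ℕ),
        (∑' j, g j) = g i + ∑' j, (if j = i then 0 else g j) :=
      fun g i => by convert ENNReal.tsum_eq_add_tsum_ite (f := g) i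
    have hBn : B n = A n + D := by
      rw [hBq n, hAq n, hD]
      calc (∑' i : ℕ, ∑' j : ℕ, c i j)
          = ∑' i : ℕ, (c i i + ∑' j : ℕ, (if j = i then 0 else c i j)) :=
            tsum_congr fun i => hsplit (c i) i
        _ = (∑' i : ℕ, c i i) + ∑' i : ℕ, ∑' j : ℕ, (if j = i then 0 else c i j) :=
            ENNReal.tsum_add
        _ = (∑' i : ℕ, P {ω | i < Z n ω}) + ∑' i : ℕ, ∑' j : ℕ, (if j = i then 0 else c i j) := by
            congr 1
            exact tsum_congr fun i => by simp only [hc, Set.inter_self]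
    have hcii : ∀ i, ∫⁻ ω, f i ω * f i ω ∂P = P {ω | i < Z n ω} * E2 := by
      intro i
      rw [show (fun ω => f i ω * f i ω)
          = (fun ω => ({ω | i < Z n ω}).indicator 1 ω * ((X n i ω : ℝ≥0∞))^2) from
        funext fun ω => by by_cases h : i < Z n ω <;> simp [hf, h, pow_two]]
      rw [hfact n _ ((hXGc n i).pow_const 2) _ (hAset n i), hX2lint n i]
    have hcij : ∀ i j, i ≠ j → ∫⁻ ω, f i ω * f j ω ∂P = c i j * (M*M) := by
      intro i j hij
      rw [show (fun ω => f i ω * f j ω)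
          = (fun ω => ({ω | i < Z n ω} ∩ {ω | j < Z n ω}).indicator 1 ω
              * ((X n i ω : ℝ≥0∞) * (X n j ω : ℝ≥0∞))) from
        funext fun ω => by
          by_cases h1 : i < Z n ω <;> by_cases h2 : j < Z n ω <;>
            simp [hf, h1, h2, Set.indicator_apply] <;> ring]
      rw [hfact n (fun ω => (X n i ω : ℝ≥0∞) * (X n j ω : ℝ≥0∞)) ((hXGc n i).mul (hXGc n j)) _ ((hAset n i).inter (hAset n j)),
        hXXlint n i j hij]
    have hB1 : B (n+1) = E2 * A n + (M*M) * D := by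
      have hpt : ∀ ω, ((Z (n+1) ω : ℝ≥0∞))^2 = ∑' i : ℕ, ∑' j : ℕ, f i ω * f j ω := by
        intro ω
        rw [pow_two, hZpt n ω, ← ENNReal.tsum_mul_right]
        exact tsum_congr fun i => by rw [← ENNReal.tsum_mul_left]
      calc B (n+1) = ∫⁻ ω, ∑' i : ℕ, ∑' j : ℕ, f i ω * f j ω ∂P := lintegral_congr hpt
        _ = ∑' i : ℕ, ∫⁻ ω, ∑' j : ℕ, f i ω * f j ω ∂P :=
            lintegral_tsum fun i => (Measurable.ennreal_tsum fun j =>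
              (hfmeas i).mul (hfmeas j)).aemeasurable
        _ = ∑' i : ℕ, ∑' j : ℕ, ∫⁻ ω, f i ω * f j ω ∂P :=
            tsum_congr fun i => lintegral_tsum fun j => ((hfmeas i).mul (hfmeas j)).aemeasurable
        _ = ∑' i : ℕ, (P {ω | i < Z n ω} * E2
              + ∑' j : ℕ, (if j = i then 0 else c i j * (M*M))) := by
            refine tsum_congr fun i => ?_
            rw [hsplit (fun j => ∫⁻ ω, f i ω * f j ω ∂P) i, hcii i]
            congr 1
            refine tsum_congr fun j => ?_
            by_cases h : j = i
            · simp [h]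
            · rw [if_neg h, if_neg h, hcij i j (Ne.symm h)]
        _ = (∑' i : ℕ, P {ω | i < Z n ω} * E2)
              + ∑' i : ℕ, ∑' j : ℕ, (if j = i then 0 else c i j * (M*M)) := ENNReal.tsum_add
        _ = E2 * A n + (M*M) * D := by
            rw [ENNReal.tsum_mul_right, ← hAq n, mul_comm]
            congr 1
            rw [hD, ← ENNReal.tsum_mul_left]
            exact tsum_congr fun i => by
              rw [← ENNReal.tsum_mul_left]
              exact tsum_congr fun j => by by_cases h : j = i <;> simp [h, mul_comm]
    rw [hB1, hBn]; ring
  -- closed forms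
  have hMne0 : M ≠ 0 := (ENNReal.ofReal_pos.mpr hm0).ne'
  have hMfin : M ≠ ∞ := ENNReal.ofReal_ne_top
  have hA0 : A 0 = 1 := by
    have h1 : ∀ ω, ((Z 0 ω : ℝ≥0∞)) = 1 := fun ω => by rw [hZ0 ω]; norm_num
    rw [hA]
    simp only [lintegral_congr h1]
    simp
  have hAn : ∀ n, A n = M ^ n := by
    intro n
    induction n with
    | zero => simpa using hA0
    | succ k ih => rw [hArec k, ih, pow_succ, mul_comm]
  have hAfin : ∀ n, A n ≠ ∞ := fun n => by
    rw [hAn n]; exact ENNReal.pow_ne_top hMfin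
  have hE2split : E2 = ENNReal.ofReal σ2 + M * M := by
    rw [hE2, ENNReal.ofReal_add hσ0 (sq_nonneg m), hM, ← ENNReal.ofReal_mul hm0.le]
    congr 2
    ring
  have hBrec : ∀ n, B (n+1) = (M*M) * B n + ENNReal.ofReal σ2 * A n := by
    intro n
    have h := hkey n
    rw [hE2split] at h
    have hfin : (M*M) * A n ≠ ∞ :=
      ENNReal.mul_ne_top (ENNReal.mul_ne_top hMfin hMfin) (hAfin n)
    have h2 : B (n+1) + (M*M) * A n
        = ((M*M) * B n + ENNReal.ofReal σ2 * A n) + (M*M) * A n := by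
      rw [h]; ring
    exact (ENNReal.add_left_inj hfin).mp h2
  have hB0 : B 0 = 1 := by
    have h1 : ∀ ω, ((Z 0 ω : ℝ≥0∞))^2 = 1 := fun ω => by rw [hZ0 ω]; norm_num
    rw [hB]
    simp only [lintegral_congr h1]
    simp
  have hMB : ∀ n, M * B n
      = M ^ (2*n+1) + ENNReal.ofReal σ2 * ∑ k ∈ Finset.range n, M ^ (n+k) := by
    intro n
    induction n with
    | zero => simp [hB0]
    | succ k ih =>
      have e2 : ∑ j ∈ Finset.range (k+1), M ^ (k+1+j)
          = (∑ j ∈ Finset.range k, M^(k+2+j)) + M^(k+1) := by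
        rw [Finset.sum_range_succ' (fun j => M^(k+1+j)) k]
        congr 1
        exact Finset.sum_congr rfl fun j _ => by rw [show k+1+(j+1) = k+2+j from by omega]
      calc M * B (k+1) = (M*M) * (M * B k) + ENNReal.ofReal σ2 * (M * M^k) := by
            rw [hBrec k, hAn k]; ring
        _ = (M*M) * (M ^ (2*k+1) + ENNReal.ofReal σ2 * ∑ j ∈ Finset.range k, M ^ (k+j))
              + ENNReal.ofReal σ2 * (M * M^k) := by rw [ih]
        _ = M ^ (2*(k+1)+1) + ENNReal.ofReal σ2 * ∑ j ∈ Finset.range (k+1), M ^ (k+1+j) := by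
            rw [e2]
            rw [show (∑ j ∈ Finset.range k, M^(k+2+j)) = (M*M) * ∑ j ∈ Finset.range k, M^(k+j) from by
              rw [Finset.mul_sum]
              exact Finset.sum_congr rfl fun j _ => by
                rw [show k+2+j = (k+j)+2 from by omega, pow_add]; ring]
            ring
  -- finiteness / positivity of B
  have hBfin : ∀ n, B n ≠ ∞ := by
    intro n hcon
    have h1 : M * B n = ∞ := by rw [hcon, ENNReal.mul_top hMne0]
    rw [hMB n] at h1
    exact (ENNReal.add_ne_top.mpr ⟨ENNReal.pow_ne_top hMfin,
      ENNReal.mul_ne_top ENNReal.ofReal_ne_top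
        (ENNReal.sum_ne_top.mpr fun k _ => ENNReal.pow_ne_top hMfin)⟩) h1
  have hBpos : ∀ n, B n ≠ 0 := by
    intro n hcon
    have h1 : M * B n = 0 := by rw [hcon, mul_zero]
    rw [hMB n] at h1
    exact (pow_ne_zero (2*n+1) hMne0) (add_eq_zero.mp h1).1
  -- real-side inequality
  set r : ℝ := m * (m - 1) / (σ2 + m * (m - 1)) with hr
  have hs : (0:ℝ) < σ2 + m * (m - 1) := by nlinarith
  have hreal : ∀ n, r * (m^(2*n+1) + σ2 * ∑ k ∈ Finset.range n, m^(n+k)) ≤ m^(2*n+1) := by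
    intro n
    set S : ℝ := ∑ k ∈ Finset.range n, m^(n+k) with hSdef
    have hSnn : 0 ≤ S := Finset.sum_nonneg fun k _ => by positivity
    have hgeo : S * (m - 1) ≤ m^(2*n) := by
      have h1 : S = m^n * ∑ k ∈ Finset.range n, m^k := by
        rw [hSdef, Finset.mul_sum]; exact Finset.sum_congr rfl fun k _ => pow_add m n k
      rw [h1, mul_assoc, geom_sum_mul]
      have h2 : m^n * (m^n - 1) ≤ m^n * m^n := by nlinarith [pow_pos hm0 n]
      calc m^n * (m^n - 1) ≤ m^n * m^n := h2
        _ = m^(2*n) := by rw [← pow_add]; congr 1; omega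
    rw [hr, div_mul_eq_mul_div, div_le_iff₀ hs]
    have hterm : m*(m-1) * (σ2 * S) ≤ m^(2*n+1) * σ2 := by
      have h3 := mul_le_mul_of_nonneg_left hgeo (mul_nonneg hm0.le hσ0)
      calc m*(m-1)*(σ2 * S) = (m*σ2) * (S*(m-1)) := by ring
        _ ≤ (m*σ2) * m^(2*n) := h3
        _ = m^(2*n+1) * σ2 := by rw [pow_succ]; ring
    nlinarith [hterm]
  have hrBle : ∀ n, ENNReal.ofReal r * B n ≤ M ^ (2*n) := by
    intro n
    have e1 : M ^ (2*n+1) + ENNReal.ofReal σ2 * ∑ k ∈ Finset.range n, M^(n+k)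
        = ENNReal.ofReal (m^(2*n+1) + σ2 * ∑ k ∈ Finset.range n, m^(n+k)) := by
      rw [ENNReal.ofReal_add (pow_nonneg hm0.le _)
        (mul_nonneg hσ0 (Finset.sum_nonneg fun k _ => pow_nonneg hm0.le _)),
        ENNReal.ofReal_mul hσ0,
        ENNReal.ofReal_sum_of_nonneg fun k _ => pow_nonneg hm0.le _]
      congr 1
      · exact (ENNReal.ofReal_pow hm0.le _).symm
      · congr 1
        exact Finset.sum_congr rfl fun k _ => (ENNReal.ofReal_pow hm0.le _).symm
    have h1 : ENNReal.ofReal r * (M * B n) ≤ M * M ^ (2*n) := by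
      rw [hMB n, e1, ← ENNReal.ofReal_mul (div_nonneg (by nlinarith) hs.le : (0:ℝ) ≤ r)]
      calc ENNReal.ofReal (r * (m^(2*n+1) + σ2 * ∑ k ∈ Finset.range n, m^(n+k)))
          ≤ ENNReal.ofReal (m^(2*n+1)) := ENNReal.ofReal_le_ofReal (hreal n)
        _ = M * M ^ (2*n) := by
            have hMM : M * M ^ (2*n) = ENNReal.ofReal (m * m^(2*n)) := by
              rw [hM, ENNReal.ofReal_mul hm0.le, ENNReal.ofReal_pow hm0.le]
            rw [hMM]
            congr 1
            ring
    have h2 : M * (ENNReal.ofReal r * B n) ≤ M * M ^ (2*n) := by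
      calc M * (ENNReal.ofReal r * B n) = ENNReal.ofReal r * (M * B n) := by ring
        _ ≤ M * M ^ (2*n) := h1
    exact (ENNReal.mul_le_mul_iff_right hMne0 hMfin).mp h2
  -- Paley-Zygmund via Cauchy-Schwarz
  have hPZ : ∀ n, A n * A n ≤ B n * P {ω | 1 ≤ Z n ω} := by
    intro n
    set S : Set Ω := {ω | 1 ≤ Z n ω} with hS
    have hSm : MeasurableSet S := hZmeas n (measurableSet_Ici : MeasurableSet (Set.Ici 1))
    have hconj : Real.HolderConjugate 2 2 := Real.HolderConjugate.two_two
    have hCS := ENNReal.lintegral_mul_le_Lp_mul_Lq P hconj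
      (mcoe.comp (hZmeas n)).aemeasurable
      ((measurable_one.indicator hSm : Measurable (S.indicator (1 : Ω → ℝ≥0∞)))).aemeasurable
    simp only [Pi.mul_apply, Function.comp_apply] at hCS
    have e1 : ∫⁻ ω, (Z n ω : ℝ≥0∞) * S.indicator 1 ω ∂P = A n := by
      refine lintegral_congr fun ω => ?_
      by_cases h : ω ∈ S
      · simp [Set.indicator_of_mem h]
      · have hz : Z n ω = 0 := by
          simp only [hS, Set.mem_setOf_eq, not_le] at h
          omega
        rw [hz]
        simp
    have e2 : ∫⁻ ω, ((Z n ω : ℝ≥0∞)) ^ (2:ℝ) ∂P = B n := by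
      refine lintegral_congr fun ω => ?_
      rw [show (2:ℝ) = ((2:ℕ):ℝ) from by norm_num, ENNReal.rpow_natCast]
    have e3 : ∫⁻ ω, (S.indicator (1 : Ω → ℝ≥0∞) ω) ^ (2:ℝ) ∂P = P S := by
      rw [show (fun ω => (S.indicator (1 : Ω → ℝ≥0∞) ω) ^ (2:ℝ))
          = S.indicator (fun _ => 1) from funext fun ω => by
        by_cases h : ω ∈ S
        · simp [Set.indicator_of_mem h]
        · simp [Set.indicator_of_notMem h, ENNReal.zero_rpow_of_pos (by norm_num : (0:ℝ) < 2)]]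
      exact lintegral_indicator_one hSm
    rw [e1, e2, e3] at hCS
    have hsq : ∀ x : ℝ≥0∞, x ^ (1/2:ℝ) * x ^ (1/2:ℝ) = x := by
      intro x
      rw [← ENNReal.rpow_add_of_nonneg (x := x) _ _ (by norm_num) (by norm_num)]
      norm_num
    calc A n * A n ≤ (B n ^ (1/2:ℝ) * P S ^ (1/2:ℝ)) * (B n ^ (1/2:ℝ) * P S ^ (1/2:ℝ)) :=
          mul_le_mul' hCS hCS
      _ = (B n ^ (1/2:ℝ) * B n ^ (1/2:ℝ)) * (P S ^ (1/2:ℝ) * P S ^ (1/2:ℝ)) := by ring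
      _ = B n * P S := by rw [hsq, hsq]
  have hPn : ∀ n, ENNReal.ofReal r ≤ P {ω | 1 ≤ Z n ω} := by
    intro n
    have h1 : B n * ENNReal.ofReal r ≤ B n * P {ω | 1 ≤ Z n ω} := by
      calc B n * ENNReal.ofReal r = ENNReal.ofReal r * B n := mul_comm _ _
        _ ≤ M ^ (2*n) := hrBle n
        _ = A n * A n := by rw [hAn n, ← pow_add]; congr 1; omega
        _ ≤ B n * P {ω | 1 ≤ Z n ω} := hPZ n
    exact (ENNReal.mul_le_mul_iff_right (hBpos n) (hBfin n)).mp h1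
  -- conclusion
  have hSetEq : {ω | ∀ n, 1 ≤ Z n ω} = ⋂ n, {ω | 1 ≤ Z n ω} := by
    ext ω; simp [Set.mem_iInter]
  have hanti : Antitone (fun n => {ω | 1 ≤ Z n ω}) := by
    apply antitone_nat_of_succ_le
    intro n ω hω
    simp only [Set.mem_setOf_eq] at hω ⊢
    by_contra h
    have hz : Z n ω = 0 := by omega
    rw [hZrec n ω, hz] at hω
    simp at hω
  rw [hSetEq, hanti.measure_iInter
    (fun n => (hZmeas n (measurableSet_Ici : MeasurableSet (Set.Ici 1))).nullMeasurableSet)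
    ⟨0, measure_ne_top P _⟩]
  exact le_iInf hPn
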